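/- For every natural number l, the Fubini number satisfies r_l = (1/2) Σ_{n≥0} n^l / 2^n, with the infinite series converging. -/

import Mathlib

def stirling2 : ℕ → ℕ → ℕ
  | 0, 0 => 1
  | 0, _ + 1 => 0
  | _ + 1, 0 => 0
  | n + 1, k + 1 => stirling2 n k + (k + 1) * stirling2 n (k + 1)

/-- Fubini number: number of preferential arrangements of an `l`-set. -/
def fubini (l : ℕ) : ℕ := ∑ k ∈ Finset.range (l + 1), stirling2 l k * Nat.factorial k

/-!
Expanding `n ^ l = ∑ₖ S(l, k) · n(n - 1)⋯(n - k + 1)` reduces the series to the sums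
`∑ₙ n(n - 1)⋯(n - k + 1) · rⁿ = k! rᵏ / (1 - r) ^ (k + 1)`, which are `k! rᵏ` times the
negative binomial series. At `r = 1 / 2` each of them equals `2 · k!`.
-/

open Finset

lemma stirling2_eq_stirlingSecond : ∀ n k : ℕ, stirling2 n k = Nat.stirlingSecond n k
  | 0, 0 | 0, _ + 1 | _ + 1, 0 => rfl
  | n + 1, k + 1 => by
    rw [stirling2, Nat.stirlingSecond, stirling2_eq_stirlingSecond n k,
      stirling2_eq_stirlingSecond n (k + 1), add_comm]

namespace Nat

lemma mul_descFactorial_eq (n k : ℕ) :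
    n * n.descFactorial k = n.descFactorial (k + 1) + k * n.descFactorial k := by
  rcases le_or_gt k n with h | h
  · rw [descFactorial_succ, ← Nat.add_mul, Nat.sub_add_cancel h]
  · simp [descFactorial_eq_zero_iff_lt.2 h]

lemma pow_eq_sum_stirlingSecond_mul_descFactorial (n l : ℕ) :
    n ^ l = ∑ k ∈ range (l + 1), stirlingSecond l k * n.descFactorial k := by
  induction l with
  | zero => simp
  | succ l ih =>
    set d := n.descFactorial
    have shift : ∑ k ∈ range (l + 1), (k + 1) * stirlingSecond l (k + 1) * d (k + 1) =
        ∑ k ∈ range (l + 1), k * stirlingSecond l k * d k := by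
      have := sum_range_succ' (fun k => k * stirlingSecond l k * d k) (l + 1)
      rw [sum_range_succ, stirlingSecond_eq_zero_of_lt l.lt_succ_self] at this
      simpa using this.symm
    calc n ^ (l + 1)
        = ∑ k ∈ range (l + 1), stirlingSecond l k * (n * d k) := by
          rw [pow_succ, ih, sum_mul]
          exact sum_congr rfl fun k _ => by ring
      _ = ∑ k ∈ range (l + 1), (k + 1) * stirlingSecond l (k + 1) * d (k + 1) +
            ∑ k ∈ range (l + 1), stirlingSecond l k * d (k + 1) := by
          rw [shift, ← sum_add_distrib]
          exact sum_congr rfl fun k _ => by rw [mul_descFactorial_eq]; ring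
      _ = ∑ k ∈ range (l + 2), stirlingSecond (l + 1) k * d k := by
          rw [sum_range_succ' _ (l + 1), ← sum_add_distrib]
          simp only [stirlingSecond_succ_succ, stirlingSecond_succ_zero, zero_mul, add_zero,
            add_mul]

end Nat

section Geometric

variable {𝕜 : Type*} [NormedField 𝕜]

lemma hasSum_descFactorial_mul_geometric (k : ℕ) {r : 𝕜} (hr : ‖r‖ < 1) :
    HasSum (fun n : ℕ => (n.descFactorial k : 𝕜) * r ^ n)
      (k.factorial * r ^ k / (1 - r) ^ (k + 1)) := by
  have shifted : HasSum (fun n : ℕ => ((n + k).descFactorial k : 𝕜) * r ^ (n + k))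
      (k.factorial * r ^ k / (1 - r) ^ (k + 1)) := by
    rw [← mul_one_div]
    refine ((hasSum_choose_mul_geometric_of_norm_lt_one k hr).mul_left _).congr_fun fun n => ?_
    rw [Nat.descFactorial_eq_factorial_mul_choose, pow_add]
    push_cast
    ring
  refine (add_left_injective k).hasSum_iff (fun n hn => ?_) |>.mp shifted
  have hnk : n < k := not_le.mp fun h => hn ⟨n - k, Nat.sub_add_cancel h⟩
  simp [Nat.descFactorial_eq_zero_iff_lt.2 hnk]

lemma hasSum_pow_mul_geometric (l : ℕ) {r : 𝕜} (hr : ‖r‖ < 1) :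
    HasSum (fun n : ℕ => (n : 𝕜) ^ l * r ^ n)
      (∑ k ∈ range (l + 1),
        Nat.stirlingSecond l k * (k.factorial * r ^ k / (1 - r) ^ (k + 1))) := by
  refine (hasSum_sum fun k _ => (hasSum_descFactorial_mul_geometric k hr).mul_left
    (Nat.stirlingSecond l k : 𝕜)).congr_fun fun n => ?_
  rw [← Nat.cast_pow, Nat.pow_eq_sum_stirlingSecond_mul_descFactorial]
  push_cast [sum_mul]
  exact sum_congr rfl fun k _ => by ring

end Geometric

theorem stmt_10 (l : ℕ) :
    HasSum (fun n : ℕ => (n : ℝ) ^ l / 2 ^ n) (2 * fubini l) := by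
  have half : ‖(1 / 2 : ℝ)‖ < 1 := by norm_num
  have value : 2 * (fubini l : ℝ) = ∑ k ∈ range (l + 1), Nat.stirlingSecond l k *
      (k.factorial * (1 / 2 : ℝ) ^ k / (1 - 1 / 2) ^ (k + 1)) := by
    rw [fubini, Nat.cast_sum, mul_sum]
    refine sum_congr rfl fun k _ => ?_
    rw [stirling2_eq_stirlingSecond]
    push_cast
    field_simp
    ring
  rw [value]
  exact (hasSum_pow_mul_geometric l half).congr_fun fun n => by rw [one_div_pow, mul_one_div]
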